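/- arXiv:1805.02526 — 2 statements merged into one kernel-verified Lean document; each statement's English description precedes it below -/
import Mathlib

section
/- Consider a weighted online resource allocation instance: a finite set R of resources, each with cost function c_r : ℝ_{≥0} → ℝ_{≥0} that is nondecreasing, differentiable, and such that t ↦ t·c_r(t) is convex; and n requests with weights w_i > 0 and nonempty allocation sets 𝒮_i ⊆ 2^R. Suppose β ≥ 1 is a real number with c_r(x) + c_r'(x)·x ≤ β·c_r(x) for all r ∈ R and all x ≥ 0, and suppose λ > 0 and μ ∈ [0, 1/β) are real numbers such that x·c_r(x+y) ≤ λ·x·c_r(x) + μ·y·c_r(y) for all x, y ≥ 0 and all r ∈ R. Let S = (S_1,…,S_n) be an allocation vector produced by the best reply algorithm, i.e., for every i and every S' ∈ 𝒮_i, ∑_{r ∈ S_i} c_r(ℓ_r(i)+w_i) ≤ ∑_{r ∈ S'} c_r(ℓ_r(i)+w_i) with ℓ_r(i) = ∑_{j < i, r ∈ S_j} w_j. Then for every feasible allocation vector S*, ∑_{r ∈ R} w_r(S)·c_r(w_r(S)) ≤ (β·λ/(1 − β·μ)) · ∑_{r ∈ R} w_r(S*)·c_r(w_r(S*)), where w_r(T)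 = ∑_{i : r ∈ T_i} w_i. -/
/-!
Telescoping the prefix loads writes `C(S)` as the sum over requests `i` of the increments of
`t ↦ t c_r(t)` caused by `i`. By semi-convexity and the elasticity bound `β`, the increment at
`r ∈ S_i` is at most `β w_i c_r(ℓ_r(i) + w_i)`; the best reply property lets us replace `S_i` by
`S*_i`, and monotonicity raises the load to `w_r(S) + w_r(S*)`. Summing gives
`C(S) ≤ β ∑_r w_r(S*) c_r(w_r(S) + w_r(S*)) ≤ β (λ C(S*) + μ C(S))` by smoothness, and
`βμ < 1` lets us solve for `C(S)`.
-/

open Finset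

theorem Fin.sum_sub_prefix_sums {M G : Type*} [AddCommMonoid M] [AddCommGroup G]
    (F : M → G) : ∀ {n : ℕ} (a : Fin n → M),
    ∑ i, (F (∑ j < i, a j + a i) - F (∑ j < i, a j)) = F (∑ i, a i) - F 0
  | 0, _ => by simp
  | n + 1, a => by
    rw [Fin.sum_univ_castSucc, Fin.sum_univ_castSucc a]
    simp only [Fin.sum_Iio_castSucc, Fin.sum_sub_prefix_sums F (fun i => a i.castSucc)]
    rw [Fin.Iio_last_eq_map, sum_map]
    simp only [Fin.coe_castSuccEmb]
    abel

theorem mul_apply_sub_mul_apply_le {c : ℝ → ℝ} {β x y : ℝ}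
    (hconv : ConvexOn ℝ (Set.Ici 0) (fun t => t * c t)) (hdiff : DifferentiableAt ℝ c y)
    (hβ : c y + deriv c y * y ≤ β * c y) (hx : 0 ≤ x) (hxy : x ≤ y) :
    y * c y - x * c x ≤ β * ((y - x) * c y) := by
  rcases hxy.eq_or_lt with rfl | hlt
  · simp
  have hderiv : HasDerivAt (fun t => t * c t) (1 * c y + y * deriv c y) y :=
    (hasDerivAt_id' y).mul hdiff.hasDerivAt
  have hslope := hconv.slope_le_deriv (Set.mem_Ici.2 hx) (Set.mem_Ici.2 (hx.trans hxy)) hlt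
    hderiv.differentiableAt
  rw [hderiv.deriv, slope_def_field, div_le_iff₀ (sub_pos.2 hlt)] at hslope
  nlinarith

section Allocation

variable {R : Type*} [DecidableEq R] {n : ℕ}

/-- `w_r(S)` -/
def load (w : Fin n → ℝ) (S : Fin n → Finset R) (r : R) : ℝ :=
  ∑ i ∈ univ.filter (fun i => r ∈ S i), w i

/-- `ℓ_r(i)` -/
def loadBefore (w : Fin n → ℝ) (S : Fin n → Finset R) (i : Fin n) (r : R) : ℝ :=
  ∑ j ∈ univ.filter (fun j => j < i ∧ r ∈ S j), w j

def cost [Fintype R] (c : R → ℝ → ℝ) (w : Fin n → ℝ) (S : Fin n → Finset R) : ℝ :=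
  ∑ r, load w S r * c r (load w S r)

lemma load_eq_sum_ite (w : Fin n → ℝ) (S : Fin n → Finset R) (r : R) :
    load w S r = ∑ i, if r ∈ S i then w i else 0 :=
  sum_filter _ _

lemma loadBefore_eq_sum_Iio (w : Fin n → ℝ) (S : Fin n → Finset R) (i : Fin n) (r : R) :
    loadBefore w S i r = ∑ j < i, if r ∈ S j then w j else 0 := by
  rw [loadBefore, ← sum_filter, ← filter_gt_eq_Iio, filter_filter]

lemma apply_load_eq_sum_increments (F : ℝ → ℝ) (hF : F 0 = 0) (w : Fin n → ℝ)
    (S : Fin n → Finset R) (r : R) :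
    F (load w S r) = ∑ i ∈ univ.filter (fun i => r ∈ S i),
      (F (loadBefore w S i r + w i) - F (loadBefore w S i r)) := by
  have htel := Fin.sum_sub_prefix_sums F (fun i => if r ∈ S i then w i else 0)
  rw [hF, sub_zero, ← load_eq_sum_ite] at htel
  rw [← htel, sum_filter]
  refine sum_congr rfl fun i _ => ?_
  split_ifs <;> simp [loadBefore_eq_sum_Iio]

lemma cost_eq_sum_increments [Fintype R] (c : R → ℝ → ℝ) (w : Fin n → ℝ)
    (S : Fin n → Finset R) :
    cost c w S = ∑ i, ∑ r ∈ S i,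
      ((loadBefore w S i r + w i) * c r (loadBefore w S i r + w i)
        - loadBefore w S i r * c r (loadBefore w S i r)) := by
  rw [cost, sum_congr rfl fun r _ => apply_load_eq_sum_increments (fun t => t * c r t)
    (zero_mul _) w S r]
  exact sum_comm' (by simp)

lemma sum_mul_sum_eq_sum_load_mul [Fintype R] (w : Fin n → ℝ) (S : Fin n → Finset R)
    (g : R → ℝ) :
    ∑ i, w i * ∑ r ∈ S i, g r = ∑ r, load w S r * g r := by
  simp_rw [mul_sum, load, sum_mul]
  exact sum_comm' (by simp)

variable {w : Fin n → ℝ} {S : Fin n → Finset R}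

lemma loadBefore_nonneg (hw : ∀ i, 0 ≤ w i) (i : Fin n) (r : R) : 0 ≤ loadBefore w S i r :=
  sum_nonneg fun j _ => hw j

lemma load_nonneg (hw : ∀ i, 0 ≤ w i) (r : R) : 0 ≤ load w S r :=
  sum_nonneg fun j _ => hw j

lemma loadBefore_le_load (hw : ∀ i, 0 ≤ w i) (i : Fin n) (r : R) :
    loadBefore w S i r ≤ load w S r :=
  sum_le_sum_of_subset_of_nonneg (fun j hj => by simp only [mem_filter] at hj ⊢; exact ⟨hj.1, hj.2.2⟩) fun j _ _ => hw j

lemma le_load_of_mem (hw : ∀ i, 0 ≤ w i) {i : Fin n} {r : R} (h : r ∈ S i) :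
    w i ≤ load w S r :=
  single_le_sum (fun j _ => hw j) (by simpa using h)

def IsBestReply (c : R → ℝ → ℝ) (w : Fin n → ℝ) (𝒮 : Fin n → Set (Finset R))
    (S : Fin n → Finset R) : Prop :=
  ∀ i, ∀ S' ∈ 𝒮 i, ∑ r ∈ S i, c r (loadBefore w S i r + w i)
    ≤ ∑ r ∈ S', c r (loadBefore w S i r + w i)

theorem cost_le_of_isBestReply [Fintype R] {c : R → ℝ → ℝ} {β : ℝ}
    {𝒮 : Fin n → Set (Finset R)} {T : Fin n → Finset R}
    (hmono : ∀ r, MonotoneOn (c r) (Set.Ici 0)) (hdiff : ∀ r, Differentiable ℝ (c r))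
    (hconv : ∀ r, ConvexOn ℝ (Set.Ici 0) (fun t => t * c r t)) (hβ : 0 ≤ β)
    (hβbound : ∀ r, ∀ x : ℝ, 0 ≤ x → c r x + deriv (c r) x * x ≤ β * c r x)
    (hw : ∀ i, 0 ≤ w i) (hS : IsBestReply c w 𝒮 S) (hT : ∀ i, T i ∈ 𝒮 i) :
    cost c w S ≤ β * ∑ r, load w T r * c r (load w S r + load w T r) := by
  rw [cost_eq_sum_increments, ← sum_mul_sum_eq_sum_load_mul, mul_sum]
  refine sum_le_sum fun i _ => ?_
  have hℓ := loadBefore_nonneg (S := S) hw i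
  calc _ ≤ ∑ r ∈ S i, β * (w i * c r (loadBefore w S i r + w i)) :=
        sum_le_sum fun r _ => by
          simpa using mul_apply_sub_mul_apply_le (hconv r) (hdiff r _)
            (hβbound r _ (add_nonneg (hℓ r) (hw i))) (hℓ r) (le_add_of_nonneg_right (hw i))
    _ = β * (w i * ∑ r ∈ S i, c r (loadBefore w S i r + w i)) := by rw [mul_sum, mul_sum]
    _ ≤ β * (w i * ∑ r ∈ T i, c r (loadBefore w S i r + w i)) :=
        mul_le_mul_of_nonneg_left (mul_le_mul_of_nonneg_left (hS i _ (hT i)) (hw i)) hβ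
    _ ≤ β * (w i * ∑ r ∈ T i, c r (load w S r + load w T r)) := by
        gcongr with r hr
        · exact hw i
        · exact hmono r (add_nonneg (hℓ r) (hw i))
            (add_nonneg (load_nonneg hw r) (load_nonneg hw r))
            (add_le_add (loadBefore_le_load hw i r) (le_load_of_mem hw hr))

theorem sum_load_mul_le_of_smooth [Fintype R] {c : R → ℝ → ℝ} {lam μ : ℝ}
    {T : Fin n → Finset R} (hw : ∀ i, 0 ≤ w i)
    (hsmooth : ∀ r, ∀ x y : ℝ, 0 ≤ x → 0 ≤ y →
      x * c r (x + y) ≤ lam * x * c r x + μ * y * c r y) :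
    ∑ r, load w T r * c r (load w S r + load w T r) ≤ lam * cost c w T + μ * cost c w S := by
  rw [cost, cost, mul_sum, mul_sum, ← sum_add_distrib]
  refine sum_le_sum fun r _ => ?_
  have := hsmooth r _ _ (load_nonneg (S := T) hw r) (load_nonneg (S := S) hw r)
  rw [add_comm (load w T r)] at this
  linarith

end Allocation

theorem best_reply_smoothness_competitive_general
    (R : Type) [Fintype R] [DecidableEq R]
    (c : R → ℝ → ℝ)
    (hmono : ∀ r, MonotoneOn (c r) (Set.Ici 0))
    (hdiff : ∀ r, Differentiable ℝ (c r))
    (hconv : ∀ r, ConvexOn ℝ (Set.Ici 0) (fun t => t * c r t))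
    (β : ℝ) (hβ : 1 ≤ β)
    (hβbound : ∀ r, ∀ x : ℝ, 0 ≤ x → c r x + deriv (c r) x * x ≤ β * c r x)
    (lam μ : ℝ) (hμβ : μ < 1 / β)
    (hsmooth : ∀ r, ∀ x y : ℝ, 0 ≤ x → 0 ≤ y →
      x * c r (x + y) ≤ lam * x * c r x + μ * y * c r y)
    (n : ℕ) (w : Fin n → ℝ) (hw : ∀ i, 0 < w i)
    (𝒮 : Fin n → Set (Finset R))
    (S : Fin n → Finset R)
    -- the best reply property
    (hbr : ∀ i : Fin n, ∀ S' ∈ 𝒮 i,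
      ∑ r ∈ S i, c r ((∑ j ∈ Finset.univ.filter (fun j : Fin n => j < i ∧ r ∈ S j), w j) + w i)
        ≤ ∑ r ∈ S', c r ((∑ j ∈ Finset.univ.filter (fun j : Fin n => j < i ∧ r ∈ S j), w j) + w i))
    (Sstar : Fin n → Finset R) (hSstar : ∀ i, Sstar i ∈ 𝒮 i) :
    ∑ r : R, (∑ i ∈ Finset.univ.filter (fun i : Fin n => r ∈ S i), w i)
        * c r (∑ i ∈ Finset.univ.filter (fun i : Fin n => r ∈ S i), w i)
      ≤ β * lam / (1 - β * μ)
        * ∑ r : R, (∑ i ∈ Finset.univ.filter (fun i : Fin n => r ∈ Sstar i), w i)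
            * c r (∑ i ∈ Finset.univ.filter (fun i : Fin n => r ∈ Sstar i), w i) := by
  change cost c w S ≤ β * lam / (1 - β * μ) * cost c w Sstar
  have hβ0 : 0 < β := zero_lt_one.trans_le hβ
  have hw0 : ∀ i, 0 ≤ w i := fun i => (hw i).le
  have key : cost c w S ≤ β * (lam * cost c w Sstar + μ * cost c w S) :=
    (cost_le_of_isBestReply hmono hdiff hconv hβ0.le hβbound hw0 hbr hSstar).trans
      (mul_le_mul_of_nonneg_left (sum_load_mul_le_of_smooth hw0 hsmooth) hβ0.le)
  have hβμ : β * μ < 1 := by rwa [lt_div_iff₀ hβ0, mul_comm] at hμβ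
  rw [div_mul_eq_mul_div, le_div_iff₀ (sub_pos.2 hβμ)]
  linarith

/-- The `(λ, μ)`-smoothness bound for the best reply algorithm on weighted resource
allocation problems with nondecreasing, differentiable, semi-convex cost functions:
the algorithm is `βλ/(1-βμ)`-competitive. -/
theorem best_reply_smoothness_competitive
    (R : Type) [Fintype R] [DecidableEq R]
    (c : R → ℝ → ℝ)
    (hnonneg : ∀ r, ∀ x : ℝ, 0 ≤ x → 0 ≤ c r x)
    (hmono : ∀ r, MonotoneOn (c r) (Set.Ici 0))
    (hdiff : ∀ r, Differentiable ℝ (c r))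
    (hconv : ∀ r, ConvexOn ℝ (Set.Ici 0) (fun t => t * c r t))
    (β : ℝ) (hβ : 1 ≤ β)
    (hβbound : ∀ r, ∀ x : ℝ, 0 ≤ x → c r x + deriv (c r) x * x ≤ β * c r x)
    (lam μ : ℝ) (hlam : 0 < lam) (hμ : 0 ≤ μ) (hμβ : μ < 1 / β)
    (hsmooth : ∀ r, ∀ x y : ℝ, 0 ≤ x → 0 ≤ y →
      x * c r (x + y) ≤ lam * x * c r x + μ * y * c r y)
    (n : ℕ) (w : Fin n → ℝ) (hw : ∀ i, 0 < w i)
    (𝒮 : Fin n → Set (Finset R)) (h𝒮 : ∀ i, (𝒮 i).Nonempty)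
    (S : Fin n → Finset R) (hS : ∀ i, S i ∈ 𝒮 i)
    -- the best reply property
    (hbr : ∀ i : Fin n, ∀ S' ∈ 𝒮 i,
      ∑ r ∈ S i, c r ((∑ j ∈ Finset.univ.filter (fun j : Fin n => j < i ∧ r ∈ S j), w j) + w i)
        ≤ ∑ r ∈ S', c r ((∑ j ∈ Finset.univ.filter (fun j : Fin n => j < i ∧ r ∈ S j), w j) + w i))
    (Sstar : Fin n → Finset R) (hSstar : ∀ i, Sstar i ∈ 𝒮 i) :
    ∑ r : R, (∑ i ∈ Finset.univ.filter (fun i : Fin n => r ∈ S i), w i)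
        * c r (∑ i ∈ Finset.univ.filter (fun i : Fin n => r ∈ S i), w i)
      ≤ β * lam / (1 - β * μ)
        * ∑ r : R, (∑ i ∈ Finset.univ.filter (fun i : Fin n => r ∈ Sstar i), w i)
            * c r (∑ i ∈ Finset.univ.filter (fun i : Fin n => r ∈ Sstar i), w i) :=
  best_reply_smoothness_competitive_general R c hmono hdiff hconv β hβ hβbound lam μ hμβ hsmooth n w
    hw 𝒮 S hbr Sstar hSstar
end

section
/- For every real number d_r ≥ 2, the function c ↦ (d_r+2)·e^{−1/c} − d_r·e^{−(d_r+2)/(c·d_r − 1)} is strictly increasing on [1, ∞); that is, for all c₂ > c₁ ≥ 1, the value at c₂ is strictly greater than the value at c₁. Moreover, its limit as c → ∞ equals 2. -/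
/-!
With `a = 1/c` and `b = (d+2)/(cd-1)`, the derivative is positive iff
`d²c² < (cd-1)² e^{b-a}`. The bound `e^{b-a} ≥ 1 + (b-a)` reduces this to the identity
`(cd-1)² (1 + (b-a)) = d²c² + (d - 1 - 1/c)`, and `d - 1 - 1/c > 0` for `d ≥ 2 > 1 + 1/c`.
As `c → ∞` both exponents tend to `0`, so the function tends to `(d+2) - d = 2`.
-/

open Real Filter Set Topology

noncomputable def case3Term (d c : ℝ) : ℝ :=
  (d + 2) * exp (-(1 / c)) - d * exp (-((d + 2) / (c * d - 1)))

variable {c d : ℝ}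

theorem hasDerivAt_case3Term (hc : c ≠ 0) (hcd : c * d - 1 ≠ 0) :
    HasDerivAt (case3Term d)
      ((d + 2) * exp (-(1 / c)) / c ^ 2
        - d ^ 2 * (d + 2) * exp (-((d + 2) / (c * d - 1))) / (c * d - 1) ^ 2) c := by
  have hinv : HasDerivAt (fun x : ℝ => -(1 / x)) (1 / c ^ 2) c := by
    simpa [one_div] using (hasDerivAt_inv hc).fun_neg
  have hlin : HasDerivAt (fun x : ℝ => x * d - 1) d c := by
    simpa using ((hasDerivAt_id c).mul_const d).sub_const 1
  have hfrac : HasDerivAt (fun x : ℝ => -((d + 2) / (x * d - 1)))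
      (d * (d + 2) / (c * d - 1) ^ 2) c := by
    simp only [div_eq_mul_inv]
    exact ((hlin.fun_inv hcd).const_mul (d + 2)).fun_neg.congr_deriv (by ring)
  exact ((hinv.exp.const_mul (d + 2)).sub (hfrac.exp.const_mul d)).congr_deriv (by ring)

theorem sq_mul_sq_lt_sub_one_sq_mul_exp (hc : 1 < c) (hd : 2 ≤ d) :
    d ^ 2 * c ^ 2 < (c * d - 1) ^ 2 * exp ((d + 2) / (c * d - 1) - 1 / c) := by
  have hc0 : 0 < c := by linarith
  have hcd : 0 < c * d - 1 := by nlinarith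
  have hidentity : (c * d - 1) ^ 2 * (1 + ((d + 2) / (c * d - 1) - 1 / c))
      = d ^ 2 * c ^ 2 + (d - 1 - 1 / c) := by
    field_simp
    ring
  have hslack : 0 < d - 1 - 1 / c := by
    have : 1 / c < 1 := (div_lt_one hc0).mpr hc
    linarith
  calc d ^ 2 * c ^ 2
      < (c * d - 1) ^ 2 * (1 + ((d + 2) / (c * d - 1) - 1 / c)) := by linarith
    _ ≤ (c * d - 1) ^ 2 * exp ((d + 2) / (c * d - 1) - 1 / c) := by
        gcongr
        linarith [add_one_le_exp ((d + 2) / (c * d - 1) - 1 / c)]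

theorem deriv_case3Term_pos (hc : 1 < c) (hd : 2 ≤ d) :
    0 < (d + 2) * exp (-(1 / c)) / c ^ 2
        - d ^ 2 * (d + 2) * exp (-((d + 2) / (c * d - 1))) / (c * d - 1) ^ 2 := by
  have hcd : 0 < c * d - 1 := by nlinarith
  have hkey : d ^ 2 * c ^ 2 * exp (-((d + 2) / (c * d - 1)))
      < (c * d - 1) ^ 2 * exp (-(1 / c)) := by
    have h := mul_lt_mul_of_pos_right (sq_mul_sq_lt_sub_one_sq_mul_exp hc hd)
      (exp_pos (-((d + 2) / (c * d - 1))))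
    rwa [mul_assoc _ (exp _), ← exp_add,
      show (d + 2) / (c * d - 1) - 1 / c + -((d + 2) / (c * d - 1)) = -(1 / c) by ring] at h
  rw [sub_pos, div_lt_div_iff₀ (by positivity) (by positivity)]
  nlinarith

theorem strictMonoOn_case3Term (hd : 2 ≤ d) : StrictMonoOn (case3Term d) (Ici 1) := by
  have hderiv : ∀ x, 1 ≤ x → HasDerivAt (case3Term d)
      ((d + 2) * exp (-(1 / x)) / x ^ 2
        - d ^ 2 * (d + 2) * exp (-((d + 2) / (x * d - 1))) / (x * d - 1) ^ 2) x :=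
    fun x hx => hasDerivAt_case3Term (by positivity) (by nlinarith)
  apply strictMonoOn_of_deriv_pos (convex_Ici 1)
  · exact fun x hx => (hderiv x hx).continuousAt.continuousWithinAt
  · intro x hx
    rw [interior_Ici] at hx
    rw [(hderiv x hx.le).deriv]
    exact deriv_case3Term_pos hx hd

theorem tendsto_case3Term_atTop (hd : 0 < d) : Tendsto (case3Term d) atTop (𝓝 2) := by
  have hinv : Tendsto (fun c : ℝ => -(1 / c)) atTop (𝓝 0) := by
    simpa [one_div] using (tendsto_inv_atTop_zero (𝕜 := ℝ)).neg
  have hfrac : Tendsto (fun c : ℝ => -((d + 2) / (c * d - 1))) atTop (𝓝 0) := by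
    have hlin : Tendsto (fun c : ℝ => c * d - 1) atTop atTop :=
      tendsto_atTop_add_const_right _ _ (tendsto_id.atTop_mul_const hd)
    simpa [div_eq_mul_inv] using (hlin.inv_tendsto_atTop.const_mul (d + 2)).neg
  have h := (((continuous_exp.tendsto 0).comp hinv).const_mul (d + 2)).sub
    (((continuous_exp.tendsto 0).comp hfrac).const_mul d)
  rw [exp_zero, mul_one, mul_one, add_sub_cancel_left] at h
  exact h

/-- The function `c ↦ (d_r+2) e^{-1/c} - d_r e^{-(d_r+2)/(c d_r-1)}` is strictly
increasing on `[1, ∞)` and tends to `2` as `c → ∞`. -/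
theorem case3_term_increasing_and_limit (dr : ℝ) (hdr : 2 ≤ dr) :
    (∀ c₁ c₂ : ℝ, 1 ≤ c₁ → c₁ < c₂ →
      (dr + 2) * Real.exp (-(1 / c₁)) - dr * Real.exp (-((dr + 2) / (c₁ * dr - 1)))
        < (dr + 2) * Real.exp (-(1 / c₂)) - dr * Real.exp (-((dr + 2) / (c₂ * dr - 1))))
    ∧ Filter.Tendsto
        (fun c : ℝ => (dr + 2) * Real.exp (-(1 / c)) - dr * Real.exp (-((dr + 2) / (c * dr - 1))))
        Filter.atTop (nhds 2) :=
  ⟨fun _ _ h₁ h₁₂ => strictMonoOn_case3Term hdr h₁ (le_trans h₁ h₁₂.le) h₁₂,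
    tendsto_case3Term_atTop (by linarith)⟩
end
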